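/- arXiv:1801.00249 — 2 statements merged into one kernel-verified Lean document; each statement's English description precedes it below -/
import Mathlib

section
/- Lemma (Pochhammer-product identities for the functions T and V): For every real number u and all non-negative integers n, m with n ≥ 2m, the following hold: (i) T(u,n,m) · (u−1)_m = T(u−1,n,m) · (u+n−m)_m; (ii) if m ≥ 1 then T(u,n,m) = (u)_n · T(u+1,n−2,m−1); (iii) V(u,n,m) · [u−2]_m = V(u−2,n,m) · [u+2n−2m]_m; (iv) if m ≥ 1 then V(u,n,m) = [u]_n · V(u+2,n−2,m−1). -/
open scoped BigOperators Classical

namespace DoublyIntrudedHalvedHexagons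

/-- The hyperfactorial `H(n) = 0! 1! ⋯ (n-1)!` (so `H(n) = 1` for `n ≤ 1`). -/
def HF (n : ℕ) : ℕ := ∏ i ∈ Finset.range n, Nat.factorial i

/-- The skipping hyperfactorial `H₂(n) = ∏_{i=1}^{⌊n/2⌋} (n-2i)!` (so `H₂(n) = 1` for `n ≤ 1`). -/
def HF2 (n : ℕ) : ℕ := ∏ i ∈ Finset.range (n / 2), Nat.factorial (n - 2 * (i + 1))

/-- The odd double factorial `(2k-1)!! = 1 · 3 · 5 ⋯ (2k-1)`. -/
def oddDF (k : ℕ) : ℕ := ∏ i ∈ Finset.range k, (2 * i + 1)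

/-- The Pochhammer symbol `(u)_k = u (u+1) ⋯ (u+k-1)`. -/
def poch {R : Type*} [CommRing R] (u : R) (k : ℕ) : R :=
  ∏ i ∈ Finset.range k, (u + (i : R))

/-- The skipping Pochhammer symbol `[u]_k = u (u+2) ⋯ (u+2k-2)`. -/
def spoch {R : Type*} [CommRing R] (u : R) (k : ℕ) : R :=
  ∏ i ∈ Finset.range k, (u + 2 * (i : R))

/-- `T(u,n,m) = ∏_{i=0}^{m-1} (u+i)_{n-2i}`. -/
def Tf {R : Type*} [CommRing R] (u : R) (n m : ℕ) : R :=
  ∏ i ∈ Finset.range m, poch (u + (i : R)) (n - 2 * i)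

/-- `V(u,n,m) = ∏_{i=0}^{m-1} [u+2i]_{n-2i}`. -/
def Vf {R : Type*} [CommRing R] (u : R) (n m : ℕ) : R :=
  ∏ i ∈ Finset.range m, spoch (u + 2 * (i : R)) (n - 2 * i)

/-- Partial sums `s_k(t) = t₁ + ⋯ + t_k` of a sequence (1-indexed). -/
def psum (t : List ℕ) (k : ℕ) : ℕ := (t.take k).sum

/-- Sum of the even-indexed entries (1-indexed) of a sequence. -/
def esum (t : List ℕ) : ℕ := ∑ i ∈ Finset.range (t.length / 2), t.getD (2 * i + 1) 0

/-- Sum of the odd-indexed entries (1-indexed) of a sequence. -/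
def osum (t : List ℕ) : ℕ := ∑ i ∈ Finset.range ((t.length + 1) / 2), t.getD (2 * i) 0

section Aux
variable {R : Type*} [CommRing R]

lemma poch_succ_right (u : R) (k : ℕ) : poch u (k+1) = poch u k * (u + k) :=
  Finset.prod_range_succ _ _

lemma spoch_succ_right (u : R) (k : ℕ) : spoch u (k+1) = spoch u k * (u + 2*k) :=
  Finset.prod_range_succ _ _

lemma poch_succ_left (u : R) (k : ℕ) : poch u (k+1) = u * poch (u+1) k := by
  unfold poch
  rw [Finset.prod_range_succ']
  simp only [Nat.cast_zero, add_zero]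
  rw [mul_comm]
  congr 1
  apply Finset.prod_congr rfl
  intro i _
  push_cast; ring

lemma spoch_succ_left (u : R) (k : ℕ) : spoch u (k+1) = u * spoch (u+2) k := by
  unfold spoch
  rw [Finset.prod_range_succ']
  simp only [Nat.cast_zero, mul_zero, add_zero]
  rw [mul_comm]
  congr 1
  apply Finset.prod_congr rfl
  intro i _
  push_cast; ring

lemma poch_key (v : R) (k : ℕ) :
    poch v k * (v - 1) = poch (v - 1) k * (v + k - 1) := by
  induction k with
  | zero => simp [poch]
  | succ k ih =>
      rw [poch_succ_right, poch_succ_right]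
      push_cast
      push_cast at ih
      linear_combination (v + (k:R)) * ih

lemma spoch_key (v : R) (k : ℕ) :
    spoch v k * (v - 2) = spoch (v - 2) k * (v + 2*k - 2) := by
  induction k with
  | zero => simp [spoch]
  | succ k ih =>
      rw [spoch_succ_right, spoch_succ_right]
      push_cast
      push_cast at ih
      linear_combination (v + 2*(k:R)) * ih

lemma Tf_succ (u : R) (n m : ℕ) :
    Tf u n (m+1) = Tf u n m * poch (u + m) (n - 2*m) :=
  Finset.prod_range_succ _ _

lemma Vf_succ (u : R) (n m : ℕ) :
    Vf u n (m+1) = Vf u n m * spoch (u + 2*m) (n - 2*m) :=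
  Finset.prod_range_succ _ _

lemma Tf_left (u : R) (n m : ℕ) :
    Tf u n (m+1) = poch u n * Tf (u+1) (n-2) m := by
  unfold Tf
  rw [Finset.prod_range_succ']
  simp only [Nat.cast_zero, add_zero, Nat.mul_zero, Nat.sub_zero]
  rw [mul_comm]
  congr 1
  apply Finset.prod_congr rfl
  intro i _
  have h2 : n - 2*(i+1) = (n-2) - 2*i := by omega
  rw [h2]
  congr 1
  push_cast; ring

lemma Vf_left (u : R) (n m : ℕ) :
    Vf u n (m+1) = spoch u n * Vf (u+2) (n-2) m := by
  unfold Vf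
  rw [Finset.prod_range_succ']
  simp only [Nat.cast_zero, mul_zero, add_zero, Nat.mul_zero, Nat.sub_zero]
  rw [mul_comm]
  congr 1
  apply Finset.prod_congr rfl
  intro i _
  have h2 : n - 2*(i+1) = (n-2) - 2*i := by omega
  rw [h2]
  congr 1
  push_cast; ring

lemma T_id (u : ℝ) (n : ℕ) : ∀ m : ℕ, 2*m ≤ n →
    Tf u n m * poch (u - 1) m = Tf (u - 1) n m * poch (u + (n:ℝ) - (m:ℝ)) m := by
  intro m
  induction m with
  | zero => simp [Tf, poch]
  | succ m ih =>
      intro h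
      have h' : 2*m ≤ n := by omega
      have ihm := ih h'
      rw [Tf_succ, Tf_succ, poch_succ_right, poch_succ_left]
      have hc : ((n - 2*m : ℕ) : ℝ) = (n:ℝ) - 2*m := by
        push_cast [Nat.cast_sub h']; ring
      have hkey := poch_key (u + (m:ℝ)) (n - 2*m)
      rw [hc] at hkey
      have e1 : u + (m:ℝ) - 1 = u - 1 + (m:ℝ) := by ring
      rw [e1] at hkey
      have e2 : u + ((n:ℝ)) - ((m:ℝ)+1) + 1 = u + (n:ℝ) - (m:ℝ) := by ring
      push_cast
      rw [e2]
      -- goal: Tf u n m * poch (u+m) (n-2m) * (poch (u-1) m * (u-1+m))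
      --     = Tf (u-1) n m * poch (u-1+m) (n-2m) * ((u+n-(m+1)) * poch (u+n-m) m)
      linear_combination (Tf u n m * poch (u-1) m) * hkey +
        (poch (u - 1 + (m:ℝ)) (n - 2*m) * (u + (m:ℝ) + ((n:ℝ) - 2*(m:ℝ)) - 1)) * ihm

lemma V_id (u : ℝ) (n : ℕ) : ∀ m : ℕ, 2*m ≤ n →
    Vf u n m * spoch (u - 2) m = Vf (u - 2) n m * spoch (u + 2*(n:ℝ) - 2*(m:ℝ)) m := by
  intro m
  induction m with
  | zero => simp [Vf, spoch]
  | succ m ih =>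
      intro h
      have h' : 2*m ≤ n := by omega
      have ihm := ih h'
      rw [Vf_succ, Vf_succ, spoch_succ_right, spoch_succ_left]
      have hc : ((n - 2*m : ℕ) : ℝ) = (n:ℝ) - 2*m := by
        push_cast [Nat.cast_sub h']; ring
      have hkey := spoch_key (u + 2*(m:ℝ)) (n - 2*m)
      rw [hc] at hkey
      have e1 : u + 2*(m:ℝ) - 2 = u - 2 + 2*(m:ℝ) := by ring
      rw [e1] at hkey
      have e2 : u + 2*(n:ℝ) - 2*((m:ℝ)+1) + 2 = u + 2*(n:ℝ) - 2*(m:ℝ) := by ring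
      push_cast
      rw [e2]
      linear_combination (Vf u n m * spoch (u-2) m) * hkey +
        (spoch (u - 2 + 2*(m:ℝ)) (n - 2*m) * (u + 2*(m:ℝ) + 2*((n:ℝ) - 2*(m:ℝ)) - 2)) * ihm

end Aux

/-- Pochhammer-product identities for the functions `T` and `V`. -/
theorem TV_identities (u : ℝ) (n m : ℕ) (h : 2 * m ≤ n) :
    Tf u n m * poch (u - 1) m = Tf (u - 1) n m * poch (u + (n : ℝ) - (m : ℝ)) m ∧
    (1 ≤ m → Tf u n m = poch u n * Tf (u + 1) (n - 2) (m - 1)) ∧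
    Vf u n m * spoch (u - 2) m =
      Vf (u - 2) n m * spoch (u + 2 * (n : ℝ) - 2 * (m : ℝ)) m ∧
    (1 ≤ m → Vf u n m = spoch u n * Vf (u + 2) (n - 2) (m - 1)) := by
  refine ⟨T_id u n m h, ?_, V_id u n m h, ?_⟩
  · intro hm
    obtain ⟨k, rfl⟩ : ∃ k, m = k + 1 := ⟨m - 1, by omega⟩
    simpa using Tf_left u n k
  · intro hm
    obtain ⟨k, rfl⟩ : ∃ k, m = k + 1 := ⟨m - 1, by omega⟩
    simpa using Vf_left u n k

end DoublyIntrudedHalvedHexagons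
end

section
/- Lemma (ratio identities for the products Q and K' under incrementing the last entry): Let t = (t_1,…,t_{2l}) be a sequence of non-negative integers with partial sums s_k := t_1+⋯+t_k and e_t := Σ_{i even} t_i, and let t⁺ := (t_1,…,t_{2l−1}, t_{2l}+1). Then: (i) Q(t⁺) · (2e_t+1)! · ∏_{i=1}^{l}(s_{2l}+s_{2i−1}+1)! · ∏_{i=1}^{l−1}(s_{2l}−s_{2i})! = Q(t) · (s_{2l}+1) · (2s_{2l}+1)! · ∏_{i=1}^{l}(s_{2l}−s_{2i−1})! · ∏_{i=1}^{l−1}(s_{2l}+s_{2i}+1)!; and (ii) if s_{2l} ≥ 1, then K'(t⁺) · (2e_t)! · ∏_{i=1}^{l}(s_{2l}+s_{2i−1}−1)! · ∏_{i=1}^{l−1}(s_{2l}−s_{2i})! = K'(t) · (2s_{2l}−1)! · ∏_{i=1}^{l}(s_{2l}−s_{2i−1})! · ∏_{i=1}^{l−1}(s_{2l}+s_{2i}−1)!. -/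
open scoped BigOperators Classical

namespace DoublyIntrudedHalvedHexagons

/-- The common double product `∏_{1 ≤ i < j ≤ 2l, j-i odd} H(s_j-s_i)/H(s_j+s_i+c) ·
∏_{1 ≤ i < j ≤ 2l, j-i even} H(s_j+s_i+c)/H(s_j-s_i)` occurring in the tiling formulas
of quartered hexagons (`c = 1` for `Q`, `c = 0` for `Q'` and `K`, `c = -1` for `K'`). -/
noncomputable def cross (t : List ℕ) (c : ℤ) : ℚ :=
  ∏ p ∈ Finset.range t.length ×ˢ Finset.range t.length,
    if p.1 < p.2 then
      if (p.2 - p.1) % 2 = 1 then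
        (HF (psum t (p.2 + 1) - psum t (p.1 + 1)) : ℚ) /
          (HF (((psum t (p.2 + 1) : ℤ) + (psum t (p.1 + 1) : ℤ) + c).toNat) : ℚ)
      else
        (HF (((psum t (p.2 + 1) : ℤ) + (psum t (p.1 + 1) : ℤ) + c).toNat) : ℚ) /
          (HF (psum t (p.2 + 1) - psum t (p.1 + 1)) : ℚ)
    else 1

/-- The tiling number `Q(t)` of the quartered hexagon `Q(t₁,…,t_{2l})`. -/
noncomputable def Qf (t : List ℕ) : ℚ :=
  (∏ i ∈ Finset.range (t.length / 2),
      (Nat.factorial (psum t (2 * i + 2)) : ℚ) / (Nat.factorial (psum t (2 * i + 1)) : ℚ)) *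
    ((HF2 (2 * esum t + 1) : ℚ))⁻¹ *
    (∏ i ∈ Finset.range (t.length / 2),
      ((HF2 (2 * psum t (2 * i + 2) + 1) : ℚ) * (HF2 (2 * psum t (2 * i + 1) + 2) : ℚ))) *
    cross t 1

/-- The weighted tiling number `Q'(t)` of the quartered hexagon `Q'(t₁,…,t_{2l})`. -/
noncomputable def Qpf (t : List ℕ) : ℚ :=
  (2 : ℚ) ^ (-(esum t : ℤ)) * ((HF2 (2 * esum t + 1) : ℚ))⁻¹ *
    (∏ i ∈ Finset.range (t.length / 2),
      ((HF2 (2 * psum t (2 * i + 2) + 1) : ℚ) * (HF2 (2 * psum t (2 * i + 1)) : ℚ))) *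
    cross t 0

/-- The tiling number `K(t)` of the quartered hexagon `K(t₁,…,t_{2l})`. -/
noncomputable def Kf (t : List ℕ) : ℚ :=
  ((HF2 (2 * esum t) : ℚ))⁻¹ *
    (∏ i ∈ Finset.range (t.length / 2),
      ((HF2 (2 * psum t (2 * i + 2)) : ℚ) * (HF2 (2 * psum t (2 * i + 1) + 1) : ℚ))) *
    cross t 0

/-- The weighted tiling number `K'(t)` of the quartered hexagon `K'(t₁,…,t_{2l})`. -/
noncomputable def Kpf (t : List ℕ) : ℚ :=
  ((HF2 (2 * esum t) : ℚ))⁻¹ *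
    (∏ i ∈ Finset.range (t.length / 2),
      ((HF2 (2 * psum t (2 * i + 2) - 1) : ℚ) * (HF2 (2 * psum t (2 * i + 1)) : ℚ))) *
    cross t (-1)

/-- The list of the first `n` entries of `t`, padded by zeros. -/
def padTake (n : ℕ) (t : List ℕ) : List ℕ := (List.range n).map fun i => t.getD i 0

/-- The composite sequence `A = (0, a₁, …, a_{M₁-1}, a_{M₁}+x+y+b_{N₁}, b_{N₁-1}, …, b₁)`
with `M₁ = 2⌊(m+1)/2⌋`, `N₁ = 2⌊(n+1)/2⌋` (empty sequences count as `(0)`). -/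
def seqA (x y : ℕ) (a b : List ℕ) : List ℕ :=
  let a' := if a = [] then [0] else a
  let b' := if b = [] then [0] else b
  let M1 := 2 * ((a'.length + 1) / 2)
  let N1 := 2 * ((b'.length + 1) / 2)
  0 :: (padTake (M1 - 1) a' ++ [a'.getD (M1 - 1) 0 + x + y + b'.getD (N1 - 1) 0] ++
    (padTake (N1 - 1) b').reverse)

/-- The composite sequence `B = (a₁, …, a_{M₂}, a_{M₂+1}+x+y+b_{N₂+1}, b_{N₂}, …, b₁, z)`
with `M₂ = 2⌈(m-1)/2⌉`, `N₂ = 2⌈(n-1)/2⌉`. -/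
def seqB (x y z : ℕ) (a b : List ℕ) : List ℕ :=
  let a' := if a = [] then [0] else a
  let b' := if b = [] then [0] else b
  let M2 := 2 * (a'.length / 2)
  let N2 := 2 * (b'.length / 2)
  padTake M2 a' ++ [a'.getD M2 0 + x + y + b'.getD N2 0] ++ (padTake N2 b').reverse ++ [z]

/-- The composite sequence `A_R = (a₁, …, a_{M₂}, a_{M₂+1}+x+y+b_{N₁}, b_{N₁-1}, …, b₁)`. -/
def seqAR (x y : ℕ) (a b : List ℕ) : List ℕ :=
  let a' := if a = [] then [0] else a
  let b' := if b = [] then [0] else b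
  let M2 := 2 * (a'.length / 2)
  let N1 := 2 * ((b'.length + 1) / 2)
  padTake M2 a' ++ [a'.getD M2 0 + x + y + b'.getD (N1 - 1) 0] ++ (padTake (N1 - 1) b').reverse

/-- The composite sequence `B_R = (0, a₁, …, a_{M₁-1}, a_{M₁}+x+y+b_{N₂+1}, b_{N₂}, …, b₁, z)`. -/
def seqBR (x y z : ℕ) (a b : List ℕ) : List ℕ :=
  let a' := if a = [] then [0] else a
  let b' := if b = [] then [0] else b
  let M1 := 2 * ((a'.length + 1) / 2)
  let N2 := 2 * (b'.length / 2)
  0 :: (padTake (M1 - 1) a' ++ [a'.getD (M1 - 1) 0 + x + y + b'.getD N2 0] ++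
    (padTake N2 b').reverse ++ [z])

open Finset


lemma HF_succ (n : ℕ) : HF (n + 1) = HF n * n.factorial := Finset.prod_range_succ _ n

lemma HF_pos (n : ℕ) : 0 < HF n := Finset.prod_pos fun i _ => Nat.factorial_pos i

lemma HF2_pos (n : ℕ) : 0 < HF2 n := Finset.prod_pos fun i _ => Nat.factorial_pos _

lemma HF2_add_two (n : ℕ) : HF2 (n + 2) = HF2 n * n.factorial := by
  unfold HF2
  have h2 : (n + 2) / 2 = n / 2 + 1 := by omega
  rw [h2, Finset.prod_range_succ']
  rw [show n + 2 - 2 * (0 + 1) = n from by omega]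
  exact congrArg (· * n.factorial) (Finset.prod_congr rfl fun i _ => by rw [show n + 2 - 2 * (i + 1 + 1) = n - 2 * (i+1) from by omega])

lemma psum_succ (t : List ℕ) (k : ℕ) (hk : k < t.length) :
    psum t (k + 1) = psum t k + t.getD k 0 := by
  unfold psum
  rw [List.take_succ, List.sum_append, List.getElem?_eq_getElem hk]
  simp [List.getD, List.getElem?_eq_getElem hk]

lemma psum_of_length_le (t : List ℕ) (k : ℕ) (h : t.length ≤ k) : psum t k = t.sum := by
  unfold psum; rw [List.take_of_length_le h]

lemma psum_le_sum (t : List ℕ) (k : ℕ) : psum t k ≤ t.sum := by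
  conv_rhs => rw [← List.take_append_drop k t]
  rw [List.sum_append]; exact Nat.le_add_right _ _

lemma psum_mono (t : List ℕ) {a b : ℕ} (h : a ≤ b) : psum t a ≤ psum t b := by
  have : psum t a = psum (t.take b) a := by
    unfold psum; rw [List.take_take, min_eq_left h]
  rw [this]
  calc psum (t.take b) a ≤ (t.take b).sum := psum_le_sum _ _
    _ = psum t b := rfl

/-- The incremented sequence. -/
def tIncr (l : ℕ) (t : List ℕ) : List ℕ := t.take (2 * l - 1) ++ [t.getD (2 * l - 1) 0 + 1]

lemma tIncr_length (l : ℕ) (t : List ℕ) (hl : 1 ≤ l) (ht : t.length = 2 * l) :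
    (tIncr l t).length = 2 * l := by
  unfold tIncr
  rw [List.length_append, List.length_take]
  simp only [List.length_singleton]
  omega

lemma psum_tIncr_le (l : ℕ) (t : List ℕ) (ht : t.length = 2 * l) {k : ℕ} (hk : k ≤ 2 * l - 1) :
    psum (tIncr l t) k = psum t k := by
  unfold tIncr psum
  rw [List.take_append_of_le_length (by rw [List.length_take]; omega), List.take_take,
    min_eq_left hk]

lemma psum_tIncr_top (l : ℕ) (t : List ℕ) (hl : 1 ≤ l) (ht : t.length = 2 * l) {k : ℕ}
    (hk : 2 * l ≤ k) : psum (tIncr l t) k = psum t (2 * l) + 1 := by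
  rw [psum_of_length_le _ _ (by rw [tIncr_length l t hl ht]; omega)]
  unfold tIncr
  rw [List.sum_append, List.sum_singleton]
  have h1 : psum t (2 * l - 1 + 1) = psum t (2 * l - 1) + t.getD (2 * l - 1) 0 :=
    psum_succ t _ (by omega)
  have h2 : 2 * l - 1 + 1 = 2 * l := by omega
  have h3 : (t.take (2 * l - 1)).sum = psum t (2 * l - 1) := rfl
  rw [h2] at h1
  omega

lemma getD_tIncr_lt (l : ℕ) (t : List ℕ) (ht : t.length = 2 * l) {j : ℕ} (hj : j < 2 * l - 1) :
    (tIncr l t).getD j 0 = t.getD j 0 := by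
  unfold tIncr
  have h : j < (t.take (2 * l - 1)).length := by rw [List.length_take]; omega
  have h2 : j < t.length := by omega
  simp [List.getD, List.getElem?_append, h, List.getElem?_take, hj, h2]

lemma getD_tIncr_last (l : ℕ) (t : List ℕ) (hl : 1 ≤ l) (ht : t.length = 2 * l) :
    (tIncr l t).getD (2 * l - 1) 0 = t.getD (2 * l - 1) 0 + 1 := by
  unfold tIncr
  have h : 2 * l - 1 = (t.take (2 * l - 1)).length := by rw [List.length_take]; omega
  rw [h]
  simp [List.getD]

lemma esum_tIncr (l : ℕ) (t : List ℕ) (hl : 1 ≤ l) (ht : t.length = 2 * l) :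
    esum (tIncr l t) = esum t + 1 := by
  unfold esum
  rw [tIncr_length l t hl ht, ht, show 2 * l / 2 = l from by omega]
  obtain ⟨m, rfl⟩ : ∃ m, l = m + 1 := ⟨l - 1, by omega⟩
  rw [Finset.sum_range_succ, Finset.sum_range_succ]
  have h1 : ∀ i ∈ Finset.range m, (tIncr (m + 1) t).getD (2 * i + 1) 0 = t.getD (2 * i + 1) 0 :=
    fun i hi => getD_tIncr_lt (m + 1) t ht (by have := Finset.mem_range.mp hi; omega)
  rw [Finset.sum_congr rfl h1, show 2 * m + 1 = 2 * (m + 1) - 1 from by omega,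
    getD_tIncr_last (m + 1) t hl ht]
  omega

/-- The individual factor of the `cross` product. -/
noncomputable def crossF (t : List ℕ) (c : ℤ) (i j : ℕ) : ℚ :=
  if i < j then
    if (j - i) % 2 = 1 then
      (HF (psum t (j + 1) - psum t (i + 1)) : ℚ) /
        (HF (((psum t (j + 1) : ℤ) + (psum t (i + 1) : ℤ) + c).toNat) : ℚ)
    else
      (HF (((psum t (j + 1) : ℤ) + (psum t (i + 1) : ℤ) + c).toNat) : ℚ) /
        (HF (psum t (j + 1) - psum t (i + 1)) : ℚ)
  else 1

lemma cross_eq_prod (t : List ℕ) (c : ℤ) :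
    cross t c = ∏ j ∈ Finset.range t.length, ∏ i ∈ Finset.range t.length, crossF t c i j := by
  rw [show cross t c = ∏ p ∈ Finset.range t.length ×ˢ Finset.range t.length,
      crossF t c p.1 p.2 from rfl]
  exact Finset.prod_product_right' _ _ _
lemma crossF_one (t : List ℕ) (c : ℤ) (n : ℕ) : crossF t c n n = 1 := by
  unfold crossF; simp

lemma cross_split (l : ℕ) (t : List ℕ) (c : ℤ) (hl : 1 ≤ l) (ht : t.length = 2 * l) :
    cross t c =
      (∏ j ∈ Finset.range (2 * l - 1), ∏ i ∈ Finset.range (2 * l), crossF t c i j) *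
        ∏ i ∈ Finset.range (2 * l - 1), crossF t c i (2 * l - 1) := by
  obtain ⟨n, hn⟩ : ∃ n, 2 * l = n + 1 := ⟨2 * l - 1, by omega⟩
  have hn' : 2 * l - 1 = n := by omega
  rw [cross_eq_prod, ht, hn', hn, Finset.prod_range_succ,
    Finset.prod_range_succ (f := fun i => crossF t c i n), crossF_one, mul_one]

lemma crossF_tIncr_eq (l : ℕ) (t : List ℕ) (ht : t.length = 2 * l) (c : ℤ) {i j : ℕ}
    (hj : j + 1 ≤ 2 * l - 1) : crossF (tIncr l t) c i j = crossF t c i j := by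
  unfold crossF
  by_cases h : i < j
  · rw [psum_tIncr_le l t ht hj, psum_tIncr_le l t ht (show i + 1 ≤ 2 * l - 1 by omega)]
  · simp [h]

lemma HF_cast_ne (n : ℕ) : (HF n : ℚ) ≠ 0 :=
  Nat.cast_ne_zero.mpr (HF_pos n).ne'

lemma edge_odd (l : ℕ) (t : List ℕ) (hl : 1 ≤ l) (ht : t.length = 2 * l) (c : ℤ)
    (hc : 0 ≤ (psum t (2 * l) : ℤ) + c) {i : ℕ} (hi : i < 2 * l - 1)
    (hpar : (2 * l - 1 - i) % 2 = 1) :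
    crossF (tIncr l t) c i (2 * l - 1) *
        ((((psum t (2 * l) : ℤ) + (psum t (i + 1) : ℤ) + c).toNat.factorial : ℚ)) =
      crossF t c i (2 * l - 1) *
        ((psum t (2 * l) - psum t (i + 1)).factorial : ℚ) := by
  have hlt : i < 2 * l - 1 := hi
  unfold crossF
  rw [if_pos hlt, if_pos hlt, if_pos hpar, if_pos hpar]
  have h2l : 2 * l - 1 + 1 = 2 * l := by omega
  rw [h2l, psum_tIncr_top l t hl ht (le_refl _),
    psum_tIncr_le l t ht (show i + 1 ≤ 2 * l - 1 by omega)]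
  set s := psum t (2 * l) with hs
  set a := psum t (i + 1) with ha
  have hle : a ≤ s := psum_mono t (by omega)
  have hnn : 0 ≤ (s : ℤ) + (a : ℤ) + c := by omega
  set m := ((s : ℤ) + (a : ℤ) + c).toNat with hm
  have h1 : s + 1 - a = (s - a) + 1 := by omega
  have h2 : ((s + 1 : ℕ) : ℤ) + (a : ℤ) + c = (m : ℤ) + 1 := by omega
  rw [h1, h2, show ((m : ℤ) + 1).toNat = m + 1 from by omega, HF_succ, HF_succ]
  push_cast
  rw [div_mul_eq_mul_div, div_mul_eq_mul_div, div_eq_div_iff]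
  · ring
  · exact mul_ne_zero (HF_cast_ne m) (Nat.cast_ne_zero.mpr (Nat.factorial_pos m).ne')
  · exact HF_cast_ne m

lemma edge_even (l : ℕ) (t : List ℕ) (hl : 1 ≤ l) (ht : t.length = 2 * l) (c : ℤ)
    (hc : 0 ≤ (psum t (2 * l) : ℤ) + c) {i : ℕ} (hi : i < 2 * l - 1)
    (hpar : (2 * l - 1 - i) % 2 = 0) :
    crossF (tIncr l t) c i (2 * l - 1) *
        ((psum t (2 * l) - psum t (i + 1)).factorial : ℚ) =
      crossF t c i (2 * l - 1) *
        ((((psum t (2 * l) : ℤ) + (psum t (i + 1) : ℤ) + c).toNat.factorial : ℚ)) := by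
  have hlt : i < 2 * l - 1 := hi
  unfold crossF
  rw [if_pos hlt, if_pos hlt, if_neg (by omega), if_neg (by omega)]
  have h2l : 2 * l - 1 + 1 = 2 * l := by omega
  rw [h2l, psum_tIncr_top l t hl ht (le_refl _),
    psum_tIncr_le l t ht (show i + 1 ≤ 2 * l - 1 by omega)]
  set s := psum t (2 * l) with hs
  set a := psum t (i + 1) with ha
  have hle : a ≤ s := psum_mono t (by omega)
  have hnn : 0 ≤ (s : ℤ) + (a : ℤ) + c := by omega
  set m := ((s : ℤ) + (a : ℤ) + c).toNat with hm
  have h1 : s + 1 - a = (s - a) + 1 := by omega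
  have h2 : ((s + 1 : ℕ) : ℤ) + (a : ℤ) + c = (m : ℤ) + 1 := by omega
  rw [h1, h2, show ((m : ℤ) + 1).toNat = m + 1 from by omega, HF_succ, HF_succ]
  push_cast
  rw [div_mul_eq_mul_div, div_mul_eq_mul_div, div_eq_div_iff]
  · ring
  · exact mul_ne_zero (HF_cast_ne _)
      (Nat.cast_ne_zero.mpr (Nat.factorial_pos (s - a)).ne')
  · exact HF_cast_ne _

lemma prod_range_odd_even (h : ℕ → ℚ) (m : ℕ) :
    ∏ i ∈ Finset.range (2 * m + 1), h i =
      (∏ k ∈ Finset.range (m + 1), h (2 * k)) * ∏ k ∈ Finset.range m, h (2 * k + 1) := by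
  induction m with
  | zero => simp
  | succ m ih =>
    rw [show 2 * (m + 1) + 1 = (2 * m + 1) + 1 + 1 from by ring, Finset.prod_range_succ,
      Finset.prod_range_succ, ih, Finset.prod_range_succ, Finset.prod_range_succ,
      show 2 * m + 1 + 1 = 2 * (m + 1) from by ring]
    rw [Finset.prod_range_succ, Finset.prod_range_succ]
    ring
lemma cross_incr (l : ℕ) (t : List ℕ) (hl : 1 ≤ l) (ht : t.length = 2 * l) (c : ℤ)
    (hc : 0 ≤ (psum t (2 * l) : ℤ) + c) :
    cross (tIncr l t) c *
        (∏ k ∈ Finset.range l,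
          ((((psum t (2 * l) : ℤ) + (psum t (2 * k + 1) : ℤ) + c).toNat.factorial : ℚ))) *
        (∏ k ∈ Finset.range (l - 1),
          ((psum t (2 * l) - psum t (2 * k + 2)).factorial : ℚ)) =
      cross t c *
        (∏ k ∈ Finset.range l, ((psum t (2 * l) - psum t (2 * k + 1)).factorial : ℚ)) *
        (∏ k ∈ Finset.range (l - 1),
          ((((psum t (2 * l) : ℤ) + (psum t (2 * k + 2) : ℤ) + c).toNat.factorial : ℚ))) := by
  have ht' : (tIncr l t).length = 2 * l := tIncr_length l t hl ht
  rw [cross_split l t c hl ht, cross_split l (tIncr l t) c hl ht']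
  have hC : (∏ j ∈ Finset.range (2 * l - 1), ∏ i ∈ Finset.range (2 * l),
      crossF (tIncr l t) c i j) =
      ∏ j ∈ Finset.range (2 * l - 1), ∏ i ∈ Finset.range (2 * l), crossF t c i j :=
    Finset.prod_congr rfl fun j hj => Finset.prod_congr rfl fun i _ =>
      crossF_tIncr_eq l t ht c (by have := Finset.mem_range.mp hj; omega)
  rw [hC]
  suffices hsuff : (∏ i ∈ Finset.range (2 * l - 1), crossF (tIncr l t) c i (2 * l - 1)) *
      (∏ k ∈ Finset.range l,
        ((((psum t (2 * l) : ℤ) + (psum t (2 * k + 1) : ℤ) + c).toNat.factorial : ℚ))) *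
      (∏ k ∈ Finset.range (l - 1),
        ((psum t (2 * l) - psum t (2 * k + 2)).factorial : ℚ)) =
      (∏ i ∈ Finset.range (2 * l - 1), crossF t c i (2 * l - 1)) *
      (∏ k ∈ Finset.range l, ((psum t (2 * l) - psum t (2 * k + 1)).factorial : ℚ)) *
      (∏ k ∈ Finset.range (l - 1),
        ((((psum t (2 * l) : ℤ) + (psum t (2 * k + 2) : ℤ) + c).toNat.factorial : ℚ))) by
    linear_combination
      (∏ j ∈ Finset.range (2 * l - 1), ∏ i ∈ Finset.range (2 * l), crossF t c i j) * hsuff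
  obtain ⟨m, rfl⟩ : ∃ m, l = m + 1 := ⟨l - 1, by omega⟩
  have h1 : 2 * (m + 1) - 1 = 2 * m + 1 := by omega
  have h2 : m + 1 - 1 = m := rfl
  rw [h1, h2,
    prod_range_odd_even (fun i => crossF (tIncr (m + 1) t) c i (2 * m + 1)) m,
    prod_range_odd_even (fun i => crossF t c i (2 * m + 1)) m]
  have hodd : (∏ k ∈ Finset.range (m + 1), crossF (tIncr (m + 1) t) c (2 * k) (2 * m + 1)) *
      (∏ k ∈ Finset.range (m + 1),
        ((((psum t (2 * (m + 1)) : ℤ) + (psum t (2 * k + 1) : ℤ) + c).toNat.factorial : ℚ))) =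
      (∏ k ∈ Finset.range (m + 1), crossF t c (2 * k) (2 * m + 1)) *
      (∏ k ∈ Finset.range (m + 1),
        ((psum t (2 * (m + 1)) - psum t (2 * k + 1)).factorial : ℚ)) := by
    rw [← Finset.prod_mul_distrib, ← Finset.prod_mul_distrib]
    refine Finset.prod_congr rfl fun k hk => ?_
    have hk' := Finset.mem_range.mp hk
    have := edge_odd (m + 1) t hl ht c hc (i := 2 * k) (by omega) (by omega)
    rw [h1] at this
    exact this
  have heven : (∏ k ∈ Finset.range m, crossF (tIncr (m + 1) t) c (2 * k + 1) (2 * m + 1)) *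
      (∏ k ∈ Finset.range m,
        ((psum t (2 * (m + 1)) - psum t (2 * k + 2)).factorial : ℚ)) =
      (∏ k ∈ Finset.range m, crossF t c (2 * k + 1) (2 * m + 1)) *
      (∏ k ∈ Finset.range m,
        ((((psum t (2 * (m + 1)) : ℤ) + (psum t (2 * k + 2) : ℤ) + c).toNat.factorial : ℚ))) := by
    rw [← Finset.prod_mul_distrib, ← Finset.prod_mul_distrib]
    refine Finset.prod_congr rfl fun k hk => ?_
    have hk' := Finset.mem_range.mp hk
    have := edge_even (m + 1) t hl ht c hc (i := 2 * k + 1) (by omega) (by omega)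
    rw [h1] at this
    rw [show 2 * k + 1 + 1 = 2 * k + 2 from rfl] at this
    exact this
  linear_combination
    ((∏ k ∈ Finset.range m, crossF (tIncr (m + 1) t) c (2 * k + 1) (2 * m + 1)) *
      ∏ k ∈ Finset.range m,
        ((psum t (2 * (m + 1)) - psum t (2 * k + 2)).factorial : ℚ)) * hodd +
    ((∏ k ∈ Finset.range (m + 1), crossF t c (2 * k) (2 * m + 1)) *
      ∏ k ∈ Finset.range (m + 1),
        ((psum t (2 * (m + 1)) - psum t (2 * k + 1)).factorial : ℚ)) * heven
lemma Q_incr (l : ℕ) (t : List ℕ) (hl : 1 ≤ l) (ht : t.length = 2 * l) :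
    Qf (tIncr l t) * (Nat.factorial (2 * esum t + 1) : ℚ) *
        (∏ i ∈ Finset.range l,
          (Nat.factorial (psum t (2 * l) + psum t (2 * i + 1) + 1) : ℚ)) *
        (∏ i ∈ Finset.range (l - 1),
          (Nat.factorial (psum t (2 * l) - psum t (2 * i + 2)) : ℚ)) =
      Qf t * ((psum t (2 * l) + 1 : ℕ) : ℚ) *
        (Nat.factorial (2 * psum t (2 * l) + 1) : ℚ) *
        (∏ i ∈ Finset.range l,
          (Nat.factorial (psum t (2 * l) - psum t (2 * i + 1)) : ℚ)) *
        (∏ i ∈ Finset.range (l - 1),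
          (Nat.factorial (psum t (2 * l) + psum t (2 * i + 2) + 1) : ℚ)) := by
  have hlen' : (tIncr l t).length = 2 * l := tIncr_length l t hl ht
  -- the cross identity, with `toNat`s converted
  have hcross : cross (tIncr l t) 1 *
      (∏ k ∈ Finset.range l,
        (Nat.factorial (psum t (2 * l) + psum t (2 * k + 1) + 1) : ℚ)) *
      (∏ k ∈ Finset.range (l - 1),
        (Nat.factorial (psum t (2 * l) - psum t (2 * k + 2)) : ℚ)) =
      cross t 1 *
      (∏ k ∈ Finset.range l,
        (Nat.factorial (psum t (2 * l) - psum t (2 * k + 1)) : ℚ)) *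
      (∏ k ∈ Finset.range (l - 1),
        (Nat.factorial (psum t (2 * l) + psum t (2 * k + 2) + 1) : ℚ)) := by
    have h := cross_incr l t hl ht 1 (by positivity)
    have e1 : (∏ k ∈ Finset.range l,
        ((((psum t (2 * l) : ℤ) + (psum t (2 * k + 1) : ℤ) + 1).toNat.factorial : ℚ))) =
        ∏ k ∈ Finset.range l,
          (Nat.factorial (psum t (2 * l) + psum t (2 * k + 1) + 1) : ℚ) :=
      Finset.prod_congr rfl fun k _ => by
        rw [show (((psum t (2 * l) : ℤ)) + (psum t (2 * k + 1) : ℤ) + 1).toNat =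
          psum t (2 * l) + psum t (2 * k + 1) + 1 from by omega]
    have e2 : (∏ k ∈ Finset.range (l - 1),
        ((((psum t (2 * l) : ℤ) + (psum t (2 * k + 2) : ℤ) + 1).toNat.factorial : ℚ))) =
        ∏ k ∈ Finset.range (l - 1),
          (Nat.factorial (psum t (2 * l) + psum t (2 * k + 2) + 1) : ℚ) :=
      Finset.prod_congr rfl fun k _ => by
        rw [show (((psum t (2 * l) : ℤ)) + (psum t (2 * k + 2) : ℤ) + 1).toNat =
          psum t (2 * l) + psum t (2 * k + 2) + 1 from by omega]
    rw [e1, e2] at h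
    exact h
  -- the first product
  have hA : (∏ i ∈ Finset.range l,
      (Nat.factorial (psum (tIncr l t) (2 * i + 2)) : ℚ) /
        (Nat.factorial (psum (tIncr l t) (2 * i + 1)) : ℚ)) =
      (∏ i ∈ Finset.range l,
        (Nat.factorial (psum t (2 * i + 2)) : ℚ) / (Nat.factorial (psum t (2 * i + 1)) : ℚ)) *
        ((psum t (2 * l) + 1 : ℕ) : ℚ) := by
    obtain ⟨m, rfl⟩ : ∃ m, l = m + 1 := ⟨l - 1, by omega⟩
    have efirst : (∏ i ∈ Finset.range m,
        (Nat.factorial (psum (tIncr (m + 1) t) (2 * i + 2)) : ℚ) /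
          (Nat.factorial (psum (tIncr (m + 1) t) (2 * i + 1)) : ℚ)) =
        ∏ i ∈ Finset.range m,
          (Nat.factorial (psum t (2 * i + 2)) : ℚ) / (Nat.factorial (psum t (2 * i + 1)) : ℚ) :=
      Finset.prod_congr rfl fun i hi => by
        have him := Finset.mem_range.mp hi
        rw [psum_tIncr_le (m + 1) t ht (by omega), psum_tIncr_le (m + 1) t ht (by omega)]
    rw [Finset.prod_range_succ, Finset.prod_range_succ, efirst,
      psum_tIncr_top (m + 1) t hl ht (by omega),
      psum_tIncr_le (m + 1) t ht (by omega),
      show 2 * m + 2 = 2 * (m + 1) from by ring, Nat.factorial_succ]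
    push_cast
    ring
  -- the HF2 product
  have hB : (∏ i ∈ Finset.range l,
      (HF2 (2 * psum (tIncr l t) (2 * i + 2) + 1) : ℚ) *
        (HF2 (2 * psum (tIncr l t) (2 * i + 1) + 2) : ℚ)) =
      (∏ i ∈ Finset.range l,
        (HF2 (2 * psum t (2 * i + 2) + 1) : ℚ) * (HF2 (2 * psum t (2 * i + 1) + 2) : ℚ)) *
        (Nat.factorial (2 * psum t (2 * l) + 1) : ℚ) := by
    obtain ⟨m, rfl⟩ : ∃ m, l = m + 1 := ⟨l - 1, by omega⟩
    have efirst : (∏ i ∈ Finset.range m,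
        (HF2 (2 * psum (tIncr (m + 1) t) (2 * i + 2) + 1) : ℚ) *
          (HF2 (2 * psum (tIncr (m + 1) t) (2 * i + 1) + 2) : ℚ)) =
        ∏ i ∈ Finset.range m,
          (HF2 (2 * psum t (2 * i + 2) + 1) : ℚ) * (HF2 (2 * psum t (2 * i + 1) + 2) : ℚ) :=
      Finset.prod_congr rfl fun i hi => by
        have him := Finset.mem_range.mp hi
        rw [psum_tIncr_le (m + 1) t ht (by omega), psum_tIncr_le (m + 1) t ht (by omega)]
    rw [Finset.prod_range_succ, Finset.prod_range_succ, efirst,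
      psum_tIncr_top (m + 1) t hl ht (by omega),
      psum_tIncr_le (m + 1) t ht (by omega),
      show 2 * (psum t (2 * (m + 1)) + 1) + 1 = (2 * psum t (2 * (m + 1)) + 1) + 2 from by ring,
      HF2_add_two, show 2 * m + 2 = 2 * (m + 1) from by ring]
    push_cast
    ring
  have hfe : ((2 * esum t + 1).factorial : ℚ) ≠ 0 :=
    Nat.cast_ne_zero.mpr (Nat.factorial_pos _).ne'
  have hinv : ((2 * esum t + 1).factorial : ℚ)⁻¹ * ((2 * esum t + 1).factorial : ℚ) = 1 :=
    inv_mul_cancel₀ hfe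
  unfold Qf
  rw [hlen', ht, show 2 * l / 2 = l from by omega, esum_tIncr l t hl ht,
    show 2 * (esum t + 1) + 1 = (2 * esum t + 1) + 2 from by ring, HF2_add_two, hA, hB,
    Nat.cast_mul, mul_inv]
  linear_combination
    ((∏ i ∈ Finset.range l,
        (Nat.factorial (psum t (2 * i + 2)) : ℚ) / (Nat.factorial (psum t (2 * i + 1)) : ℚ)) *
      ((psum t (2 * l) + 1 : ℕ) : ℚ) * ((HF2 (2 * esum t + 1) : ℚ))⁻¹ *
      (∏ i ∈ Finset.range l,
        (HF2 (2 * psum t (2 * i + 2) + 1) : ℚ) * (HF2 (2 * psum t (2 * i + 1) + 2) : ℚ)) *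
      (Nat.factorial (2 * psum t (2 * l) + 1) : ℚ)) * hcross +
    ((∏ i ∈ Finset.range l,
        (Nat.factorial (psum t (2 * i + 2)) : ℚ) / (Nat.factorial (psum t (2 * i + 1)) : ℚ)) *
      ((psum t (2 * l) + 1 : ℕ) : ℚ) * ((HF2 (2 * esum t + 1) : ℚ))⁻¹ *
      (∏ i ∈ Finset.range l,
        (HF2 (2 * psum t (2 * i + 2) + 1) : ℚ) * (HF2 (2 * psum t (2 * i + 1) + 2) : ℚ)) *
      (Nat.factorial (2 * psum t (2 * l) + 1) : ℚ) * cross (tIncr l t) 1 *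
      (∏ i ∈ Finset.range l,
        (Nat.factorial (psum t (2 * l) + psum t (2 * i + 1) + 1) : ℚ)) *
      (∏ i ∈ Finset.range (l - 1),
        (Nat.factorial (psum t (2 * l) - psum t (2 * i + 2)) : ℚ))) * hinv
lemma Kp_incr (l : ℕ) (t : List ℕ) (hl : 1 ≤ l) (ht : t.length = 2 * l)
    (hs : 1 ≤ psum t (2 * l)) :
    Kpf (tIncr l t) * (Nat.factorial (2 * esum t) : ℚ) *
        (∏ i ∈ Finset.range l,
          (Nat.factorial (psum t (2 * l) + psum t (2 * i + 1) - 1) : ℚ)) *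
        (∏ i ∈ Finset.range (l - 1),
          (Nat.factorial (psum t (2 * l) - psum t (2 * i + 2)) : ℚ)) =
      Kpf t * (Nat.factorial (2 * psum t (2 * l) - 1) : ℚ) *
        (∏ i ∈ Finset.range l,
          (Nat.factorial (psum t (2 * l) - psum t (2 * i + 1)) : ℚ)) *
        (∏ i ∈ Finset.range (l - 1),
          (Nat.factorial (psum t (2 * l) + psum t (2 * i + 2) - 1) : ℚ)) := by
  have hlen' : (tIncr l t).length = 2 * l := tIncr_length l t hl ht
  have hcross : cross (tIncr l t) (-1) *
      (∏ k ∈ Finset.range l,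
        (Nat.factorial (psum t (2 * l) + psum t (2 * k + 1) - 1) : ℚ)) *
      (∏ k ∈ Finset.range (l - 1),
        (Nat.factorial (psum t (2 * l) - psum t (2 * k + 2)) : ℚ)) =
      cross t (-1) *
      (∏ k ∈ Finset.range l,
        (Nat.factorial (psum t (2 * l) - psum t (2 * k + 1)) : ℚ)) *
      (∏ k ∈ Finset.range (l - 1),
        (Nat.factorial (psum t (2 * l) + psum t (2 * k + 2) - 1) : ℚ)) := by
    have h := cross_incr l t hl ht (-1) (by omega)
    have e1 : (∏ k ∈ Finset.range l,
        ((((psum t (2 * l) : ℤ) + (psum t (2 * k + 1) : ℤ) + (-1)).toNat.factorial : ℚ))) =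
        ∏ k ∈ Finset.range l,
          (Nat.factorial (psum t (2 * l) + psum t (2 * k + 1) - 1) : ℚ) :=
      Finset.prod_congr rfl fun k _ => by
        rw [show (((psum t (2 * l) : ℤ)) + (psum t (2 * k + 1) : ℤ) + (-1)).toNat =
          psum t (2 * l) + psum t (2 * k + 1) - 1 from by omega]
    have e2 : (∏ k ∈ Finset.range (l - 1),
        ((((psum t (2 * l) : ℤ) + (psum t (2 * k + 2) : ℤ) + (-1)).toNat.factorial : ℚ))) =
        ∏ k ∈ Finset.range (l - 1),
          (Nat.factorial (psum t (2 * l) + psum t (2 * k + 2) - 1) : ℚ) :=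
      Finset.prod_congr rfl fun k _ => by
        rw [show (((psum t (2 * l) : ℤ)) + (psum t (2 * k + 2) : ℤ) + (-1)).toNat =
          psum t (2 * l) + psum t (2 * k + 2) - 1 from by omega]
    rw [e1, e2] at h
    exact h
  have hB : (∏ i ∈ Finset.range l,
      (HF2 (2 * psum (tIncr l t) (2 * i + 2) - 1) : ℚ) *
        (HF2 (2 * psum (tIncr l t) (2 * i + 1)) : ℚ)) =
      (∏ i ∈ Finset.range l,
        (HF2 (2 * psum t (2 * i + 2) - 1) : ℚ) * (HF2 (2 * psum t (2 * i + 1)) : ℚ)) *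
        (Nat.factorial (2 * psum t (2 * l) - 1) : ℚ) := by
    obtain ⟨m, rfl⟩ : ∃ m, l = m + 1 := ⟨l - 1, by omega⟩
    have efirst : (∏ i ∈ Finset.range m,
        (HF2 (2 * psum (tIncr (m + 1) t) (2 * i + 2) - 1) : ℚ) *
          (HF2 (2 * psum (tIncr (m + 1) t) (2 * i + 1)) : ℚ)) =
        ∏ i ∈ Finset.range m,
          (HF2 (2 * psum t (2 * i + 2) - 1) : ℚ) * (HF2 (2 * psum t (2 * i + 1)) : ℚ) :=
      Finset.prod_congr rfl fun i hi => by
        have him := Finset.mem_range.mp hi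
        rw [psum_tIncr_le (m + 1) t ht (by omega), psum_tIncr_le (m + 1) t ht (by omega)]
    rw [Finset.prod_range_succ, Finset.prod_range_succ, efirst,
      psum_tIncr_top (m + 1) t hl ht (by omega),
      psum_tIncr_le (m + 1) t ht (by omega),
      show 2 * (psum t (2 * (m + 1)) + 1) - 1 = (2 * psum t (2 * (m + 1)) - 1) + 2 from
        by omega,
      HF2_add_two, show 2 * m + 2 = 2 * (m + 1) from by ring]
    push_cast
    ring
  have hfe : ((2 * esum t).factorial : ℚ) ≠ 0 :=
    Nat.cast_ne_zero.mpr (Nat.factorial_pos _).ne'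
  have hinv : ((2 * esum t).factorial : ℚ)⁻¹ * ((2 * esum t).factorial : ℚ) = 1 :=
    inv_mul_cancel₀ hfe
  unfold Kpf
  rw [hlen', ht, show 2 * l / 2 = l from by omega, esum_tIncr l t hl ht,
    show 2 * (esum t + 1) = 2 * esum t + 2 from by ring, HF2_add_two, hB,
    Nat.cast_mul, mul_inv]
  linear_combination
    (((HF2 (2 * esum t) : ℚ))⁻¹ *
      (∏ i ∈ Finset.range l,
        (HF2 (2 * psum t (2 * i + 2) - 1) : ℚ) * (HF2 (2 * psum t (2 * i + 1)) : ℚ)) *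
      (Nat.factorial (2 * psum t (2 * l) - 1) : ℚ)) * hcross +
    (((HF2 (2 * esum t) : ℚ))⁻¹ *
      (∏ i ∈ Finset.range l,
        (HF2 (2 * psum t (2 * i + 2) - 1) : ℚ) * (HF2 (2 * psum t (2 * i + 1)) : ℚ)) *
      (Nat.factorial (2 * psum t (2 * l) - 1) : ℚ) * cross (tIncr l t) (-1) *
      (∏ i ∈ Finset.range l,
        (Nat.factorial (psum t (2 * l) + psum t (2 * i + 1) - 1) : ℚ)) *
      (∏ i ∈ Finset.range (l - 1),
        (Nat.factorial (psum t (2 * l) - psum t (2 * i + 2)) : ℚ))) * hinv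
/-- Ratio identities for the products `Q` and `K'` under incrementing the last entry of
the sequence. -/
theorem QKp_increment (l : ℕ) (t : List ℕ) (ht : t.length = 2 * l) :
    (Qf (t.take (2 * l - 1) ++ [t.getD (2 * l - 1) 0 + 1]) *
        (Nat.factorial (2 * esum t + 1) : ℚ) *
        (∏ i ∈ Finset.range l,
          (Nat.factorial (psum t (2 * l) + psum t (2 * i + 1) + 1) : ℚ)) *
        (∏ i ∈ Finset.range (l - 1),
          (Nat.factorial (psum t (2 * l) - psum t (2 * i + 2)) : ℚ)) =
      Qf t * ((psum t (2 * l) + 1 : ℕ) : ℚ) *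
        (Nat.factorial (2 * psum t (2 * l) + 1) : ℚ) *
        (∏ i ∈ Finset.range l,
          (Nat.factorial (psum t (2 * l) - psum t (2 * i + 1)) : ℚ)) *
        (∏ i ∈ Finset.range (l - 1),
          (Nat.factorial (psum t (2 * l) + psum t (2 * i + 2) + 1) : ℚ))) ∧
    (1 ≤ psum t (2 * l) →
      Kpf (t.take (2 * l - 1) ++ [t.getD (2 * l - 1) 0 + 1]) *
          (Nat.factorial (2 * esum t) : ℚ) *
          (∏ i ∈ Finset.range l,
            (Nat.factorial (psum t (2 * l) + psum t (2 * i + 1) - 1) : ℚ)) *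
          (∏ i ∈ Finset.range (l - 1),
            (Nat.factorial (psum t (2 * l) - psum t (2 * i + 2)) : ℚ)) =
        Kpf t * (Nat.factorial (2 * psum t (2 * l) - 1) : ℚ) *
          (∏ i ∈ Finset.range l,
            (Nat.factorial (psum t (2 * l) - psum t (2 * i + 1)) : ℚ)) *
          (∏ i ∈ Finset.range (l - 1),
            (Nat.factorial (psum t (2 * l) + psum t (2 * i + 2) - 1) : ℚ))) := by
  rcases Nat.eq_zero_or_pos l with rfl | hl
  · have ht0 : t = [] := List.eq_nil_of_length_eq_zero (by simpa using ht)
    subst ht0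
    constructor
    · simp [Qf, cross, esum, psum, HF2, HF]
    · intro h
      simp [psum] at h
  · constructor
    · exact Q_incr l t hl ht
    · exact fun hs => Kp_incr l t hl ht hs

end DoublyIntrudedHalvedHexagons
end
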